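/- For fixed Hermitian positive semidefinite matrix-valued affine maps λ ↦ Σ_n(λ) = σ² I + Σ_i λ_{n,i} A_{n,i}, where each A_{n,i} is Hermitian positive semidefinite and σ² > 0, the function λ ↦ −(1/M) Σ_{n=1}^M log₂ Σ_{t=1}^M det(Σ_n(λ) + Σ_t(λ))^{-1} is concave on the nonnegative orthant. -/

import Mathlib

open Real Matrix
open scoped ComplexOrder

/-!
Since `log det P = tr (log P)` for positive definite `P`, operator concavity of `log` and
positivity of the trace make `log det` concave on positive definite matrices; composed with the
affine pencils `λ ↦ Σ_n(λ) + Σ_t(λ)`, each `λ ↦ log det(Σ_n(λ) + Σ_t(λ))⁻¹` is convex on the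
orthant. By Hölder's inequality a sum of log-convex functions is log-convex, so each
`λ ↦ log Σ_t det(Σ_n(λ) + Σ_t(λ))⁻¹` is convex, and so is their sum over `n`.
-/

section Matrix

open scoped MatrixOrder Matrix.Norms.L2Operator

theorem Matrix.posDef_smul_one_add_sum_smul {m 𝕜 ι : Type*} [DecidableEq m] [RCLike 𝕜]
    [Fintype ι] {c : ℝ} (hc : 0 < c) {A : ι → Matrix m m 𝕜} (hA : ∀ i, (A i).PosSemidef)
    {l : ι → ℝ} (hl : ∀ i, 0 ≤ l i) : (c • 1 + ∑ i, l i • A i).PosDef :=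
  (PosDef.one.smul hc).add_posSemidef (posSemidef_sum _ fun i _ => (hA i).smul (hl i))

variable {n : Type*} [Fintype n]

theorem Matrix.re_trace_le_re_trace {A B : Matrix n n ℂ} (h : A ≤ B) : A.trace.re ≤ B.trace.re :=
  (Complex.le_def.mp (OrderHomClass.mono (tracePositiveLinearMap n ℝ ℂ) h)).1

variable [DecidableEq n]

theorem Matrix.IsHermitian.trace_cfc {𝕜 : Type*} [RCLike 𝕜] {A : Matrix n n 𝕜}
    (hA : A.IsHermitian) (f : ℝ → ℝ) :
    (cfc f A).trace = ∑ i, (f (hA.eigenvalues i) : 𝕜) := by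
  rw [hA.cfc_eq, IsHermitian.cfc, Unitary.conjStarAlgAut_apply, trace_mul_cycle,
    Unitary.coe_star_mul_self, one_mul, trace_diagonal]
  rfl

theorem Matrix.PosDef.re_det_pos {P : Matrix n n ℂ} (hP : P.PosDef) : 0 < P.det.re :=
  (Complex.pos_iff.mp hP.det_pos).1

theorem Matrix.PosDef.log_re_det {P : Matrix n n ℂ} (hP : P.PosDef) :
    Real.log P.det.re = (CFC.log P).trace.re := by
  rw [CFC.log, hP.1.trace_cfc, hP.1.det_eq_prod_eigenvalues]
  simp only [← RCLike.ofReal_prod, ← RCLike.ofReal_sum]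
  exact Real.log_prod fun i _ => (hP.eigenvalues_pos i).ne'

theorem Matrix.convex_setOf_posDef : Convex ℝ {P : Matrix n n ℂ | P.PosDef} := by
  simpa only [isStrictlyPositive_iff_posDef] using (CFC.concaveOn_log (A := Matrix n n ℂ)).1

theorem Matrix.concaveOn_log_re_det :
    ConcaveOn ℝ {P : Matrix n n ℂ | P.PosDef} (fun P => Real.log P.det.re) := by
  refine ⟨convex_setOf_posDef, fun P hP Q hQ a b ha hb hab => ?_⟩
  have hlog := CFC.concaveOn_log.2 hP.isStrictlyPositive hQ.isStrictlyPositive ha hb hab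
  have hPQ : (a • P + b • Q).PosDef := convex_setOf_posDef hP hQ ha hb hab
  simp only [hP.log_re_det, hQ.log_re_det, hPQ.log_re_det, smul_eq_mul]
  simpa [trace_add, trace_smul] using re_trace_le_re_trace hlog

end Matrix

theorem Real.sum_rpow_mul_rpow_le {ι : Type*} (s : Finset ι) {u v : ι → ℝ}
    (hu : ∀ i ∈ s, 0 ≤ u i) (hv : ∀ i ∈ s, 0 ≤ v i) {a b : ℝ} (ha : 0 ≤ a) (hb : 0 ≤ b)
    (hab : a + b = 1) :
    ∑ i ∈ s, u i ^ a * v i ^ b ≤ (∑ i ∈ s, u i) ^ a * (∑ i ∈ s, v i) ^ b := by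
  rcases ha.eq_or_lt with rfl | ha
  · simp [show b = 1 by linarith]
  rcases hb.eq_or_lt with rfl | hb
  · simp [show a = 1 by linarith]
  have hinv : ∀ {x c : ℝ}, 0 ≤ x → 0 < c → (x ^ c) ^ (1 / c) = x := fun hx hc => by
    rw [one_div, rpow_rpow_inv hx hc.ne']
  calc ∑ i ∈ s, u i ^ a * v i ^ b
      ≤ (∑ i ∈ s, (u i ^ a) ^ (1 / a)) ^ (1 / (1 / a)) *
          (∑ i ∈ s, (v i ^ b) ^ (1 / b)) ^ (1 / (1 / b)) :=
        inner_le_Lp_mul_Lq_of_nonneg s (holderConjugate_one_div ha hb hab)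
          (fun i hi => rpow_nonneg (hu i hi) a) (fun i hi => rpow_nonneg (hv i hi) b)
    _ = (∑ i ∈ s, u i) ^ a * (∑ i ∈ s, v i) ^ b := by
        rw [Finset.sum_congr rfl fun i hi => hinv (hu i hi) ha,
          Finset.sum_congr rfl fun i hi => hinv (hv i hi) hb, one_div_one_div, one_div_one_div]

theorem convexOn_sum {E ι : Type*} [AddCommGroup E] [Module ℝ E] {s : Set E} {t : Finset ι}
    {f : ι → E → ℝ} (hs : Convex ℝ s) (hf : ∀ i ∈ t, ConvexOn ℝ s (f i)) :
    ConvexOn ℝ s (fun x => ∑ i ∈ t, f i x) := by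
  simpa only [← Finset.sum_apply] using
    Finset.sum_induction f (ConvexOn ℝ s) (fun _ _ => ConvexOn.add) (convexOn_const 0 hs) hf

theorem convexOn_log_sum {E ι : Type*} [AddCommGroup E] [Module ℝ E] {s : Set E}
    {t : Finset ι} {f : ι → E → ℝ} (ht : t.Nonempty) (hpos : ∀ i ∈ t, ∀ x ∈ s, 0 < f i x)
    (hf : ∀ i ∈ t, ConvexOn ℝ s fun x => Real.log (f i x)) :
    ConvexOn ℝ s fun x => Real.log (∑ i ∈ t, f i x) := by
  obtain ⟨i₀, hi₀⟩ := ht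
  refine ⟨(hf i₀ hi₀).1, fun x hx y hy a b ha hb hab => ?_⟩
  have hsum_pos : ∀ z ∈ s, 0 < ∑ i ∈ t, f i z := fun z hz =>
    Finset.sum_pos (fun i hi => hpos i hi z hz) ⟨i₀, hi₀⟩
  have log_rpow_mul_rpow : ∀ {p q : ℝ}, 0 < p → 0 < q →
      Real.log (p ^ a * q ^ b) = a * Real.log p + b * Real.log q := fun hp hq => by
    rw [Real.log_mul (rpow_pos_of_pos hp a).ne' (rpow_pos_of_pos hq b).ne',
      Real.log_rpow hp, Real.log_rpow hq]
  have hterm : ∀ i ∈ t, f i (a • x + b • y) ≤ f i x ^ a * f i y ^ b := fun i hi => by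
    rw [← Real.log_le_log_iff (hpos i hi _ ((hf i hi).1 hx hy ha hb hab))
      (by have := hpos i hi x hx; have := hpos i hi y hy; positivity),
      log_rpow_mul_rpow (hpos i hi x hx) (hpos i hi y hy)]
    exact (hf i hi).2 hx hy ha hb hab
  calc Real.log (∑ i ∈ t, f i (a • x + b • y))
      ≤ Real.log ((∑ i ∈ t, f i x) ^ a * (∑ i ∈ t, f i y) ^ b) := by
        refine Real.log_le_log (hsum_pos _ ((hf i₀ hi₀).1 hx hy ha hb hab)) ?_
        exact (Finset.sum_le_sum hterm).trans (Real.sum_rpow_mul_rpow_le t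
          (fun i hi => (hpos i hi x hx).le) (fun i hi => (hpos i hi y hy).le) ha hb hab)
    _ = a • Real.log (∑ i ∈ t, f i x) + b • Real.log (∑ i ∈ t, f i y) :=
        log_rpow_mul_rpow (hsum_pos x hx) (hsum_pos y hy)

/-- the variable part of the spectral-efficiency lower bound,
`λ ↦ −(1/M) Σ_n log₂ Σ_t det(Σ_n(λ) + Σ_t(λ))⁻¹` with affine PSD maps
`Σ_n(λ) = σ²I + Σᵢ λ_{n,i} A_{n,i}`, is concave on the nonnegative orthant. -/
theorem RLB_variable_part_concave
    (N k M : ℕ) (σ2 : ℝ) (hσ : 0 < σ2)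
    (A : Fin M → Fin k → Matrix (Fin N) (Fin N) ℂ)
    (hA : ∀ n i, (A n i).PosSemidef)
    (S : (Fin M × Fin k → ℝ) → Fin M → Matrix (Fin N) (Fin N) ℂ)
    (hS : ∀ l n, S l n = σ2 • (1 : Matrix (Fin N) (Fin N) ℂ) + ∑ i, l (n, i) • A n i) :
    ConcaveOn ℝ {l : Fin M × Fin k → ℝ | ∀ j, 0 ≤ l j}
      (fun l => -(1 / M : ℝ) * ∑ n, Real.logb 2 (∑ t, (((S l n + S l t).det.re))⁻¹)) := by
  set orthant := {l : Fin M × Fin k → ℝ | ∀ j, 0 ≤ l j}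
  have horthant : Convex ℝ orthant := by
    simpa only [Set.Ici, Pi.le_def, Pi.zero_apply] using convex_Ici (0 : Fin M × Fin k → ℝ)
  let pencil (n : Fin M) : (Fin M × Fin k → ℝ) →ᵃ[ℝ] Matrix (Fin N) (Fin N) ℂ :=
    AffineMap.const ℝ _ (σ2 • 1) +
      (Fintype.linearCombination ℝ (A n) ∘ₗ LinearMap.funLeft ℝ ℝ fun i => (n, i)).toAffineMap
  have hpencil : ∀ n l, pencil n l = S l n := fun n l => by
    simp [pencil, hS, Fintype.linearCombination_apply, LinearMap.funLeft_apply]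
  have hpair_posDef : ∀ l ∈ orthant, ∀ n t, (S l n + S l t).PosDef := fun l hl n t => by
    simp only [hS]
    exact (posDef_smul_one_add_sum_smul hσ (hA n) fun i => hl _).add
      (posDef_smul_one_add_sum_smul hσ (hA t) fun i => hl _)
  have hpair : ∀ n t, ConvexOn ℝ orthant fun l => Real.log ((S l n + S l t).det.re)⁻¹ :=
    fun n t => by
      have := (concaveOn_log_re_det.comp_affineMap (pencil n + pencil t)).subset
        (fun l hl => by simpa [hpencil] using hpair_posDef l hl n t) horthant
      refine this.neg.congr fun l _ => ?_
      simp [Real.log_inv, hpencil]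
  have hrow : ∀ n, ConvexOn ℝ orthant fun l => Real.log (∑ t, ((S l n + S l t).det.re)⁻¹) :=
    fun n => convexOn_log_sum ⟨n, Finset.mem_univ n⟩
      (fun t _ l hl => inv_pos.mpr (hpair_posDef l hl n t).re_det_pos) fun t _ => hpair n t
  have hscale : (0 : ℝ) ≤ 1 / M / Real.log 2 := by positivity
  refine ((convexOn_sum (t := Finset.univ) horthant fun n _ => hrow n).smul hscale).neg.congr
    fun l _ => ?_
  simp only [Pi.neg_apply, smul_eq_mul, Real.logb, ← Finset.sum_div]
  ring
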